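/- arXiv:1805.01736 — 2 statements merged into one kernel-verified Lean document; each statement's English description precedes it below -/
import Mathlib

section
/- Let $A \subset \Omega$ be open, let $u \in L^q(A)$, and let $(u_j)$ converge to $u$ in measure on $\Omega$. If $\lim_{j\to\infty} \int_A g(x, u_j)\,dx = \int_A g(x, u)\,dx$, then $u_j \to u$ strongly in $L^q(\Omega)$ (extending functions by restriction to $A$). -/
open MeasureTheory Filter Topology Metric Set
open scoped ENNReal NNReal

noncomputable section

abbrev Euc (n : ℕ) := EuclideanSpace ℝ (Fin n)

variable {n : ℕ}

/-- Smooth test function compactly supported in `A`. -/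
def IsTestOn (A : Set (Euc n)) (φ : Euc n → ℝ) : Prop :=
  ContDiff ℝ (⊤ : ℕ∞) φ ∧ HasCompactSupport φ ∧ tsupport φ ⊆ A

/-- `g` is the distributional (weak) gradient of `u` on `A`. -/
def HasWeakGradOn (A : Set (Euc n)) (u : Euc n → ℝ) (g : Euc n → Euc n) : Prop :=
  ∀ φ : Euc n → ℝ, IsTestOn A φ → ∀ w : Euc n,
    ∫ x in A, u x * fderiv ℝ φ x w = - ∫ x in A, (inner ℝ (g x) w : ℝ) * φ x

/-- Deny–Lions space `L^{1,p}(A)`: locally integrable with weak gradient in `L^p`. -/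
def MemDL (p : ℝ) (A : Set (Euc n)) (u : Euc n → ℝ) (g : Euc n → Euc n) : Prop :=
  LocallyIntegrableOn u A ∧ HasWeakGradOn A u g ∧
    MemLp g (ENNReal.ofReal p) (volume.restrict A)

/-- Sobolev space `W^{1,p}(A)` (with a choice `g` of weak gradient). -/
def MemW1p (p : ℝ) (A : Set (Euc n)) (u : Euc n → ℝ) (g : Euc n → Euc n) : Prop :=
  MemLp u (ENNReal.ofReal p) (volume.restrict A) ∧ HasWeakGradOn A u g ∧
    MemLp g (ENNReal.ofReal p) (volume.restrict A)

/-- `W^{1,p}_0(Ω)`: member of `W^{1,p}` approximable in `W^{1,p}` norm by test functions. -/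
def MemW1p0 (p : ℝ) (Ω : Set (Euc n)) (u : Euc n → ℝ) (g : Euc n → Euc n) : Prop :=
  MemW1p p Ω u g ∧ ∃ φ : ℕ → Euc n → ℝ, (∀ k, IsTestOn Ω (φ k)) ∧
    Tendsto (fun k => ∫⁻ x in Ω, ((‖u x - φ k x‖₊ : ℝ≥0∞) ^ p +
      (‖g x - gradient (φ k) x‖₊ : ℝ≥0∞) ^ p)) atTop (𝓝 0)

/-- The `p`-capacity `C_{1,p}(s)` relative to `Ω`. -/
def pCap (p : ℝ) (Ω s : Set (Euc n)) : ℝ≥0∞ :=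
  ⨅ (u : Euc n → ℝ) (g : Euc n → Euc n) (_ : MemW1p0 p Ω u g)
    (_ : ∃ A : Set (Euc n), IsOpen A ∧ s ⊆ A ∧ ∀ᵐ x ∂volume.restrict A, 1 ≤ u x),
    ∫⁻ x in Ω, (‖g x‖₊ : ℝ≥0∞) ^ p

/-- `p`-quasi open subset of `Ω`. -/
def QuasiOpen (p : ℝ) (Ω U : Set (Euc n)) : Prop :=
  ∀ ε : ℝ≥0∞, 0 < ε → ∃ A, A ⊆ Ω ∧ IsOpen A ∧ pCap p Ω (symmDiff U A) < ε

/-- `p`-quasicontinuity of `f` on a set `E` (capacity relative to `Ω`). -/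
def QuasiContinuousOn (p : ℝ) (Ω E : Set (Euc n)) (f : Euc n → ℝ) : Prop :=
  ∀ ε : ℝ≥0∞, 0 < ε → ∃ E', pCap p Ω E' < ε ∧ ContinuousOn f (E \ E')

/-- Half ball `B^±_{ρ,ν}(x)`. -/
def halfBall (x ν : Euc n) (ρ sgn : ℝ) : Set (Euc n) :=
  {y | dist y x < ρ ∧ 0 < sgn * (inner ℝ ν (y - x) : ℝ)}

/-- The one-sided averages of `u` at `x` tend to `a`. -/
def HasOneSidedAvg (u : Euc n → ℝ) (x ν : Euc n) (sgn a : ℝ) : Prop :=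
  Tendsto (fun ρ : ℝ => ⨍ y in halfBall x ν ρ sgn, u y) (𝓝[>] (0:ℝ)) (𝓝 a)

/-- One-sided Lebesgue-point property: `⨍_{B^sgn_{ρ,ν}(x)} |u - a| → 0`. -/
def OneSidedLebesgue (u : Euc n → ℝ) (x ν : Euc n) (sgn a : ℝ) : Prop :=
  Tendsto (fun ρ : ℝ => ⨍ y in halfBall x ν ρ sgn, |u y - a|) (𝓝[>] (0:ℝ)) (𝓝 0)

/-- `J` is the absolute difference of the two one-sided averages of `u` at `x`. -/
def JumpAt (u : Euc n → ℝ) (x ν : Euc n) (J : ℝ) : Prop :=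
  ∃ a b : ℝ, HasOneSidedAvg u x ν 1 a ∧ HasOneSidedAvg u x ν (-1) b ∧ J = |a - b|

/-- `J` is (a representative of) the jump `[u]` of `u` across `Sg ∩ A`,
with capacity relative to `A`. -/
def IsJumpOf (p : ℝ) (A Sg : Set (Euc n)) (ν : Euc n → Euc n) (u J : Euc n → ℝ) : Prop :=
  QuasiContinuousOn p A (A ∩ Sg) J ∧
    pCap p A {x ∈ A ∩ Sg | ¬ JumpAt u x (ν x) (J x)} = 0

/-- A compact `(n-1)`-dimensional `C¹` hypersurface-with-boundary, described by a unit
normal field and local `C¹` graph representations. -/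
structure C1Hyp (n : ℕ) where
  carrier : Set (Euc n)
  normal : Euc n → Euc n
  isCompact : IsCompact carrier
  norm_normal : ∀ x ∈ carrier, ‖normal x‖ = 1
  cont_normal : ContinuousOn normal carrier
  locGraph : ∀ x₀ ∈ carrier, ∃ r : ℝ, 0 < r ∧ ∃ φ : Euc n → ℝ, ContDiff ℝ 1 φ ∧
    ∀ y ∈ carrier ∩ Metric.ball x₀ r,
      (inner ℝ (y - x₀) (normal x₀) : ℝ) = φ (y - (inner ℝ (y - x₀) (normal x₀) : ℝ) • normal x₀)

/-- The class `𝓜_p(Ω; Ms)` of Borel measures vanishing on sets of `p`-capacity zero and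
concentrated on `Ms`. -/
def MemCapMeas (p : ℝ) (Ω Ms : Set (Euc n)) (μ : Measure (Euc n)) : Prop :=
  (∀ B : Set (Euc n), MeasurableSet B → pCap p Ω B = 0 → μ B = 0) ∧
    μ (Ω \ Ms) = 0 ∧ μ Ωᶜ = 0

/-- Equivalence of measures in `𝓜_p(Ω;M)`: same jump energies
`∫_M [u]^p dμ` for all `u ∈ L^{1,p}(Ω \ M)`. -/
def MeasEquiv (p : ℝ) (Ω : Set (Euc n)) (M : C1Hyp n) (μ₁ μ₂ : Measure (Euc n)) : Prop :=
  ∀ u g J, MemDL p (Ω \ M.carrier) u g → IsJumpOf p Ω M.carrier M.normal u J →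
    ∫⁻ x in M.carrier, ENNReal.ofReal (|J x| ^ p) ∂μ₁ =
    ∫⁻ x in M.carrier, ENNReal.ofReal (|J x| ^ p) ∂μ₂

/-- Convergence in `L⁰(Ω)` (convergence in measure). -/
def TendstoL0 (Ω : Set (Euc n)) (uj : ℕ → Euc n → ℝ) (u : Euc n → ℝ) : Prop :=
  TendstoInMeasure (volume.restrict Ω) uj atTop u

/-- Strong convergence in `L^q(Ω)`. -/
def TendstoLq (q : ℝ) (Ω : Set (Euc n)) (uj : ℕ → Euc n → ℝ) (u : Euc n → ℝ) : Prop :=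
  Tendsto (fun j => ∫⁻ x in Ω, (‖uj j x - u x‖₊ : ℝ≥0∞) ^ q) atTop (𝓝 0)

/-- Γ-convergence in `L⁰(Ω)` of a sequence of functionals. -/
def GammaConvL0 (Ω : Set (Euc n)) (F : ℕ → (Euc n → ℝ) → ℝ≥0∞)
    (Fl : (Euc n → ℝ) → ℝ≥0∞) : Prop :=
  (∀ u uj, TendstoL0 Ω uj u → Fl u ≤ liminf (fun j => F j (uj j)) atTop) ∧
  (∀ u, ∃ uj, TendstoL0 Ω uj u ∧ limsup (fun j => F j (uj j)) atTop ≤ Fl u)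

/-- Γ-lower limit `𝓕'` in `L⁰(Ω)`. -/
def gammaLower (Ω : Set (Euc n)) (F : ℕ → (Euc n → ℝ) → ℝ≥0∞)
    (u : Euc n → ℝ) : ℝ≥0∞ :=
  ⨅ (uj : ℕ → Euc n → ℝ) (_ : TendstoL0 Ω uj u), liminf (fun j => F j (uj j)) atTop

/-- Γ-upper limit `𝓕''` in `L⁰(Ω)`. -/
def gammaUpper (Ω : Set (Euc n)) (F : ℕ → (Euc n → ℝ) → ℝ≥0∞)
    (u : Euc n → ℝ) : ℝ≥0∞ :=
  ⨅ (uj : ℕ → Euc n → ℝ) (_ : TendstoL0 Ω uj u), limsup (fun j => F j (uj j)) atTop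

/-- The functional `𝓕_K(u, A) = ∫_{A \ K} f(∇u) dx` for `u ∈ L^{1,p}(A \ K)`, `∞` otherwise. -/
def sieveFun (p : ℝ) (f : Euc n → ℝ) (K A : Set (Euc n)) (u : Euc n → ℝ) : ℝ≥0∞ :=
  ⨅ (g : Euc n → Euc n) (_ : MemDL p (A \ K) u g),
    ∫⁻ x in A \ K, ENNReal.ofReal (f (g x))

/-- The functional `𝓕^μ(u, A) = ∫_{A \ M} f(∇u) dx + ∫_{A ∩ M} [u]^p dμ`. -/
def muFun (p : ℝ) (f : Euc n → ℝ) (M : C1Hyp n) (μ : Measure (Euc n))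
    (A : Set (Euc n)) (u : Euc n → ℝ) : ℝ≥0∞ :=
  ⨅ (g : Euc n → Euc n) (J : Euc n → ℝ)
    (_ : MemDL p (A \ M.carrier) u g) (_ : IsJumpOf p A M.carrier M.normal u J),
    (∫⁻ x in A \ M.carrier, ENNReal.ofReal (f (g x))) +
      ∫⁻ x in A ∩ M.carrier, ENNReal.ofReal (|J x| ^ p) ∂μ

/-- Standing assumptions on `f`: convex, even, positively `p`-homogeneous, with
`λ|ξ|^p ≤ f(ξ) ≤ Λ|ξ|^p`. -/
def GoodIntegrand (p lam Lam : ℝ) (f : Euc n → ℝ) : Prop :=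
  ConvexOn ℝ Set.univ f ∧ (∀ ξ, f (-ξ) = f ξ) ∧
  (∀ t : ℝ, 0 ≤ t → ∀ ξ, f (t • ξ) = t ^ p * f ξ) ∧
  (∀ ξ, lam * ‖ξ‖ ^ p ≤ f ξ ∧ f ξ ≤ Lam * ‖ξ‖ ^ p)

/-- Standing assumptions on `g`: nonnegative Carathéodory integrand with `q`-growth. -/
def GoodPerturb (q c1 c2 : ℝ) (Ω : Set (Euc n)) (g : Euc n → ℝ → ℝ) : Prop :=
  (∀ x s, 0 ≤ g x s) ∧ (∀ s, Measurable fun x => g x s) ∧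
  (∀ᵐ x ∂volume.restrict Ω, Continuous (g x)) ∧
  ∃ a1 a2 : Euc n → ℝ, Integrable a1 (volume.restrict Ω) ∧
    Integrable a2 (volume.restrict Ω) ∧
    ∀ᵐ x ∂volume.restrict Ω, ∀ s : ℝ,
      c1 * |s| ^ q - a1 x ≤ g x s ∧ g x s ≤ c2 * (1 + |s| ^ q + a2 x)

open Classical in
/-- The functional `𝓖(u, A) = ∫_A g(x, u) dx` if `u ∈ L^q(A)`, `∞` otherwise. -/
def perturbFun (q : ℝ) (g : Euc n → ℝ → ℝ) (A : Set (Euc n)) (u : Euc n → ℝ) : ℝ≥0∞ :=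
  if MemLp u (ENNReal.ofReal q) (volume.restrict A) then
    ∫⁻ x in A, ENNReal.ofReal (g x (u x)) else ⊤

/-- Truncation `u^t = (u ∧ t) ∨ (-t)`. -/
def trunc (u : Euc n → ℝ) (t : ℝ) : Euc n → ℝ := fun x => max (min (u x) t) (-t)

/-- Rich family of open subsets of `Ω`. -/
def RichFamily (Ω : Set (Euc n)) (R : Set (Set (Euc n))) : Prop :=
  R ⊆ {A | IsOpen A ∧ A ⊆ Ω} ∧
  ∀ A : ℝ → Set (Euc n), (∀ t, IsOpen (A t) ∧ A t ⊆ Ω) →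
    (∀ s t : ℝ, s < t → closure (A s) ⊆ A t ∧ IsCompact (closure (A s))) →
    {t : ℝ | A t ∉ R}.Countable

/-- `K j` accumulates on `Ms`: `max_{x ∈ K j} dist(x, Ms) → 0`. -/
def AccumulatesTo (K : ℕ → Set (Euc n)) (Ms : Set (Euc n)) : Prop :=
  ∀ ε : ℝ, 0 < ε → ∀ᶠ j in atTop, K j ⊆ Metric.cthickening ε Ms

/-- `σ = div Ψ` on `Ω`, a representation of a measure in `W^{-1,p'}(Ω)`. -/
def RepDualSobolev (p' : ℝ) (Ω : Set (Euc n)) (σ : Measure (Euc n))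
    (Ψ : Euc n → Euc n) : Prop :=
  MemLp Ψ (ENNReal.ofReal p') (volume.restrict Ω) ∧
  ∀ φ : Euc n → ℝ, IsTestOn Ω φ →
    ∫ x, φ x ∂σ = - ∫ x in Ω, (inner ℝ (Ψ x) (gradient φ x) : ℝ)

/-- A (non-negative) measure of class `W^{-1,p'}(Ω)`. -/
def MemDualSobolev (p' : ℝ) (Ω : Set (Euc n)) (σ : Measure (Euc n)) : Prop :=
  ∃ Ψ : Euc n → Euc n, RepDualSobolev p' Ω σ Ψ

/-- The open cylinder with centre `x₀`, axis `ν₀`, radius and half-height `r₀`. -/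
def cylinder (x₀ ν₀ : Euc n) (r₀ : ℝ) : Set (Euc n) :=
  {y | |(inner ℝ (y - x₀) ν₀ : ℝ)| < r₀ ∧
       ‖y - x₀ - (inner ℝ (y - x₀) ν₀ : ℝ) • ν₀‖ < r₀}

/-- The graph `Σ₀` of `φ` inside the cylinder (`φ` constant along `ν₀`). -/
def graphPiece (x₀ ν₀ : Euc n) (r₀ : ℝ) (φ : Euc n → ℝ) : Set (Euc n) :=
  {y ∈ cylinder x₀ ν₀ r₀ | (inner ℝ (y - x₀) ν₀ : ℝ) = φ y}

/-- The parts `Ω₀^±` of the cylinder above (`sgn = 1`) / below (`sgn = -1`) the graph. -/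
def sidePiece (x₀ ν₀ : Euc n) (r₀ : ℝ) (φ : Euc n → ℝ) (sgn : ℝ) : Set (Euc n) :=
  {y ∈ cylinder x₀ ν₀ r₀ | 0 < sgn * ((inner ℝ (y - x₀) ν₀ : ℝ) - φ y)}

/-- The unit normal to the graph of `φ`, pointing in the direction of `ν₀`. -/
def graphNormal (ν₀ : Euc n) (φ : Euc n → ℝ) (y : Euc n) : Euc n :=
  ‖ν₀ - gradient φ y‖⁻¹ • (ν₀ - gradient φ y)

/-- The slab `S_ρ` of half-width `ρ` around the graph of `φ` in the cylinder. -/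
def slab (x₀ ν₀ : Euc n) (r₀ ρ : ℝ) (φ : Euc n → ℝ) : Set (Euc n) :=
  {y | ‖y - x₀ - (inner ℝ (y - x₀) ν₀ : ℝ) • ν₀‖ < r₀ ∧
       |(inner ℝ (y - x₀) ν₀ : ℝ) - φ y| < ρ}

/-- The translated graph `Σ_ρ^± = Σ₀ ± ρ ν₀` (`ρ` signed). -/
def shiftedGraph (x₀ ν₀ : Euc n) (r₀ : ℝ) (φ : Euc n → ℝ) (ρ : ℝ) : Set (Euc n) :=
  (fun y => y + ρ • ν₀) '' graphPiece x₀ ν₀ r₀ φ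

end


section AuxLemmas

open MeasureTheory

/-- Composition of a Carathéodory-type integrand with a simple function is measurable. -/
private lemma measurable_comp_simpleFunc {α : Type*} [MeasurableSpace α]
    (g : α → ℝ → ℝ) (hm : ∀ s, Measurable fun x => g x s)
    (φ : SimpleFunc α ℝ) : Measurable fun x => g x (φ x) := by
  have h : (fun x => g x (φ x)) = fun x =>
      ∑ s ∈ φ.range, (φ ⁻¹' {s}).indicator (fun y => g y s) x := by
    funext x
    rw [Finset.sum_eq_single_of_mem (φ x) (φ.mem_range_self x)]
    · exact (Set.indicator_of_mem (by simp : x ∈ ⇑φ ⁻¹' {φ x}) (fun y => g y (φ x))).symm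
    · intro b _ hb
      apply Set.indicator_of_notMem
      simp only [Set.mem_preimage, Set.mem_singleton_iff]
      exact fun h => hb h.symm
  rw [h]
  exact Finset.measurable_sum _ fun s _ => (hm s).indicator (φ.measurableSet_fiber s)

/-- Composition of a Carathéodory integrand with an a.e.-measurable function is
a.e.-measurable. -/
private lemma aemeasurable_comp_caratheodory {α : Type*} [MeasurableSpace α]
    {μ : Measure α} {g : α → ℝ → ℝ} (hm : ∀ s, Measurable fun x => g x s)
    (hc : ∀ᵐ x ∂μ, Continuous (g x)) {v : α → ℝ} (hv : AEMeasurable v μ) :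
    AEMeasurable (fun x => g x (v x)) μ := by
  obtain ⟨w, hw, hvw⟩ := hv
  have hsm : StronglyMeasurable w := hw.stronglyMeasurable
  have hmw : AEMeasurable (fun x => g x (w x)) μ := by
    refine aemeasurable_of_tendsto_metrizable_ae' (f := fun n x => g x (hsm.approx n x))
      (fun n => (measurable_comp_simpleFunc g hm (hsm.approx n)).aemeasurable) ?_
    filter_upwards [hc] with x hx
    exact ((hx.tendsto (w x)).comp (hsm.tendsto_approx x))
  exact hmw.congr (hvw.mono fun x hx => by simp only [hx])

/-- Generalised dominated convergence for `lintegral`, in the special case where the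
dominated sequence tends to `0` a.e. -/
private lemma lintegral_tendsto_zero_of_dominated {α : Type*} [MeasurableSpace α]
    {μ : Measure α} {f G : ℕ → α → ℝ≥0∞} {Gl : α → ℝ≥0∞}
    (hfm : ∀ j, AEMeasurable (f j) μ)
    (hle : ∀ j, f j ≤ᵐ[μ] G j)
    (hf0 : ∀ᵐ x ∂μ, Tendsto (fun j => f j x) atTop (𝓝 0))
    (hGt : ∀ᵐ x ∂μ, Tendsto (fun j => G j x) atTop (𝓝 (Gl x)))
    (hGfin : ∀ᵐ x ∂μ, Gl x ≠ ⊤)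
    (hGm : ∀ j, AEMeasurable (G j) μ)
    (hGi : Tendsto (fun j => ∫⁻ x, G j x ∂μ) atTop (𝓝 (∫⁻ x, Gl x ∂μ)))
    (hGlt : ∫⁻ x, Gl x ∂μ ≠ ⊤) :
    Tendsto (fun j => ∫⁻ x, f j x ∂μ) atTop (𝓝 0) := by
  have hGev : ∀ᶠ j in atTop, ∫⁻ x, G j x ∂μ < ⊤ :=
    hGi.eventually_lt_const hGlt.lt_top
  have hsub_m : ∀ j, AEMeasurable (fun x => G j x - f j x) μ :=
    fun j => (hGm j).sub (hfm j)
  have hlow : ∫⁻ x, Gl x ∂μ ≤ liminf (fun j => ∫⁻ x, (G j x - f j x) ∂μ) atTop := by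
    have heq : (fun x => Gl x) =ᵐ[μ] fun x => liminf (fun j => G j x - f j x) atTop := by
      filter_upwards [hf0, hGt, hGfin] with x h0 ht hfin
      have h1 : Tendsto (fun j => G j x - f j x) atTop (𝓝 (Gl x - 0)) :=
        ENNReal.Tendsto.sub ht h0 (Or.inl hfin)
      rw [tsub_zero] at h1
      exact h1.liminf_eq.symm
    calc ∫⁻ x, Gl x ∂μ = ∫⁻ x, liminf (fun j => G j x - f j x) atTop ∂μ :=
          lintegral_congr_ae heq
      _ ≤ liminf (fun j => ∫⁻ x, (G j x - f j x) ∂μ) atTop := lintegral_liminf_le' hsub_m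
  have hup : limsup (fun j => ∫⁻ x, (G j x - f j x) ∂μ) atTop ≤ ∫⁻ x, Gl x ∂μ := by
    have h1 : limsup (fun j => ∫⁻ x, (G j x - f j x) ∂μ) atTop ≤
        limsup (fun j => ∫⁻ x, G j x ∂μ) atTop :=
      limsup_le_limsup (Filter.Eventually.of_forall fun j =>
        lintegral_mono fun x => tsub_le_self)
    rwa [hGi.limsup_eq] at h1
  have hmid : Tendsto (fun j => ∫⁻ x, (G j x - f j x) ∂μ) atTop (𝓝 (∫⁻ x, Gl x ∂μ)) :=
    tendsto_of_le_liminf_of_limsup_le hlow hup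
  have heq : ∀ᶠ j in atTop,
      ∫⁻ x, G j x ∂μ - ∫⁻ x, (G j x - f j x) ∂μ = ∫⁻ x, f j x ∂μ := by
    filter_upwards [hGev] with j hj
    have hfl : ∫⁻ x, f j x ∂μ ≠ ⊤ :=
      (lt_of_le_of_lt (lintegral_mono_ae (hle j)) hj).ne
    rw [lintegral_sub' (hfm j) hfl (hle j),
      ENNReal.sub_sub_cancel hj.ne (lintegral_mono_ae (hle j))]
  have hfinal : Tendsto
      (fun j => ∫⁻ x, G j x ∂μ - ∫⁻ x, (G j x - f j x) ∂μ) atTop (𝓝 0) := by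
    have h2 := ENNReal.Tendsto.sub hGi hmid (Or.inl hGlt)
    rwa [tsub_self] at h2
  exact hfinal.congr' heq

end AuxLemmas

theorem statement12 {n : ℕ} (hn : 2 ≤ n) (q c1 c2 : ℝ) (hq : 1 ≤ q)
    (hc1 : 0 < c1) (hc12 : c1 < c2)
    (Ω : Set (Euc n)) (hΩo : IsOpen Ω) (hΩb : Bornology.IsBounded Ω)
    (A : Set (Euc n)) (hAo : IsOpen A) (hAΩ : A ⊆ Ω)
    (g : Euc n → ℝ → ℝ) (hg : GoodPerturb q c1 c2 Ω g)
    (u : Euc n → ℝ) (hu : MemLp u (ENNReal.ofReal q) (volume.restrict A))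
    (uj : ℕ → Euc n → ℝ)
    (hmeas : ∀ j, AEStronglyMeasurable (uj j) (volume.restrict Ω))
    (hconv : TendstoInMeasure (volume.restrict Ω) uj atTop u)
    (hlim : Tendsto (fun j => ∫⁻ x in A, ENNReal.ofReal (g x (uj j x))) atTop
      (𝓝 (∫⁻ x in A, ENNReal.ofReal (g x (u x))))) :
    TendstoLq q A uj u := by
  classical
  obtain ⟨hg0, hgmeas, hgcont, a1, a2, ha1int, ha2int, hgrow⟩ := hg
  have hq0 : (0:ℝ) < q := lt_of_lt_of_le one_pos hq
  unfold TendstoLq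
  set μ : Measure (Euc n) := volume.restrict A with hμdef
  have hres : (volume.restrict Ω).restrict A = μ :=
    Measure.restrict_restrict_of_subset hAΩ
  have hμle : μ ≤ volume.restrict Ω := by
    rw [← hres]; exact Measure.restrict_le_self
  have haemono : ∀ {p : Euc n → Prop},
      (∀ᵐ x ∂volume.restrict Ω, p x) → ∀ᵐ x ∂μ, p x :=
    fun h => h.filter_mono (ae_mono hμle)
  have huae : AEMeasurable u μ := hu.1.aemeasurable
  have hujae : ∀ j, AEMeasurable (uj j) μ := by
    intro j
    have h := ((hmeas j).restrict (s := A)).aemeasurable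
    rwa [hres] at h
  have hgcA : ∀ᵐ x ∂μ, Continuous (g x) := haemono hgcont
  have hgrA : ∀ᵐ x ∂μ, ∀ s : ℝ,
      c1 * |s| ^ q - a1 x ≤ g x s ∧ g x s ≤ c2 * (1 + |s| ^ q + a2 x) := haemono hgrow
  have hcast : ∀ r : ℝ, (‖r‖₊ : ℝ≥0∞) ^ q = ENNReal.ofReal (|r| ^ q) := by
    intro r
    rw [← enorm_eq_nnnorm, Real.enorm_eq_ofReal_abs, ← ENNReal.ofReal_rpow_of_nonneg (abs_nonneg r) hq0.le]
  -- finiteness facts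
  have hIu : ∫⁻ x, (‖u x‖₊ : ℝ≥0∞) ^ q ∂μ < ⊤ := by
    have hpne : (ENNReal.ofReal q) ≠ 0 := by
      simp only [ne_eq, ENNReal.ofReal_eq_zero, not_le]; exact hq0
    have h := lintegral_rpow_enorm_lt_top_of_eLpNorm_lt_top (f := u) (μ := μ)
      hpne ENNReal.ofReal_ne_top hu.2
    rwa [ENNReal.toReal_ofReal hq0.le] at h
  have hIa1 : ∫⁻ x, ENNReal.ofReal |a1 x| ∂μ < ⊤ := by
    have h : ∫⁻ x, (‖a1 x‖₊ : ℝ≥0∞) ∂μ < ⊤ := (ha1int.mono_measure hμle).2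
    simpa only [← enorm_eq_nnnorm, Real.enorm_eq_ofReal_abs] using h
  have hIa2 : ∫⁻ x, ENNReal.ofReal |a2 x| ∂μ < ⊤ := by
    have h : ∫⁻ x, (‖a2 x‖₊ : ℝ≥0∞) ∂μ < ⊤ := (ha2int.mono_measure hμle).2
    simpa only [← enorm_eq_nnnorm, Real.enorm_eq_ofReal_abs] using h
  have ha1ae : AEMeasurable a1 μ :=
    ((ha1int.mono_measure hμle).1).aemeasurable
  have ha2ae : AEMeasurable a2 μ :=
    ((ha2int.mono_measure hμle).1).aemeasurable
  have habs : ∀ {f : Euc n → ℝ}, AEMeasurable f μ → AEMeasurable (fun x => |f x|) μ :=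
    fun hf => continuous_abs.measurable.comp_aemeasurable hf
  have hAfin : μ Set.univ < ⊤ := by
    rw [hμdef, Measure.restrict_apply_univ]
    exact (hΩb.subset hAΩ).measure_lt_top
  have hguae : AEMeasurable (fun x => ENNReal.ofReal (g x (u x))) μ :=
    (aemeasurable_comp_caratheodory hgmeas hgcA huae).ennreal_ofReal
  have hgufin : ∫⁻ x, ENNReal.ofReal (g x (u x)) ∂μ ≠ ⊤ := by
    have hb : ∀ᵐ x ∂μ, ENNReal.ofReal (g x (u x)) ≤
        ENNReal.ofReal c2 * (1 + (‖u x‖₊ : ℝ≥0∞) ^ q + ENNReal.ofReal |a2 x|) := by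
      filter_upwards [hgrA] with x hx
      have h2 := (hx (u x)).2
      have hc2 : (0:ℝ) < c2 := hc1.trans hc12
      calc ENNReal.ofReal (g x (u x))
          ≤ ENNReal.ofReal (c2 * (1 + |u x| ^ q + |a2 x|)) := by
            apply ENNReal.ofReal_le_ofReal
            have ha : a2 x ≤ |a2 x| := le_abs_self _
            nlinarith
        _ = ENNReal.ofReal c2 * (1 + (‖u x‖₊ : ℝ≥0∞) ^ q + ENNReal.ofReal |a2 x|) := by
            rw [ENNReal.ofReal_mul hc2.le,
              ENNReal.ofReal_add (by positivity) (abs_nonneg _),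
              ENNReal.ofReal_add (by norm_num) (by positivity),
              ENNReal.ofReal_one, hcast (u x)]
    have hmono := lintegral_mono_ae hb
    have hXm : AEMeasurable (fun x => (‖u x‖₊ : ℝ≥0∞) ^ q) μ :=
      huae.enorm.pow_const q
    have hYm : AEMeasurable (fun x => ENNReal.ofReal |a2 x|) μ :=
      (habs ha2ae).ennreal_ofReal
    have hrhs : ∫⁻ x, ENNReal.ofReal c2 *
        (1 + (‖u x‖₊ : ℝ≥0∞) ^ q + ENNReal.ofReal |a2 x|) ∂μ < ⊤ := by
      rw [lintegral_const_mul' _ _ ENNReal.ofReal_ne_top,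
        lintegral_add_right' _ hYm, lintegral_add_right' _ hXm, lintegral_one]
      exact ENNReal.mul_lt_top ENNReal.ofReal_lt_top
        (ENNReal.add_lt_top.mpr ⟨ENNReal.add_lt_top.mpr ⟨hAfin, hIu⟩, hIa2⟩)
    exact (lt_of_le_of_lt hmono hrhs).ne
  -- convergence in measure on A
  have hconvA : TendstoInMeasure μ uj atTop u := by
    intro ε hε
    refine tendsto_of_tendsto_of_tendsto_of_le_of_le tendsto_const_nhds (hconv ε hε)
      (fun j => zero_le) (fun j => ?_)
    exact Measure.le_iff'.1 hμle _
  -- reduce to subsequences converging a.e.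
  refine tendsto_of_subseq_tendsto fun ns hns => ?_
  have hsubm : TendstoInMeasure μ (fun i => uj (ns i)) atTop u :=
    fun ε hε => (hconvA ε hε).comp hns
  obtain ⟨ms, hms, haet⟩ := hsubm.exists_seq_tendsto_ae
  refine ⟨ms, ?_⟩
  set v : ℕ → Euc n → ℝ := fun i => uj (ns (ms i)) with hvdef
  have hvae : ∀ i, AEMeasurable (v i) μ := fun i => hujae _
  have hgvae : ∀ i, AEMeasurable (fun x => ENNReal.ofReal (g x (v i x))) μ :=
    fun i => (aemeasurable_comp_caratheodory hgmeas hgcA (hvae i)).ennreal_ofReal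
  set κ : ℝ≥0∞ := ENNReal.ofReal (2 ^ q / c1) with hκdef
  have hκne : κ ≠ ⊤ := ENNReal.ofReal_ne_top
  set W : Euc n → ℝ≥0∞ :=
    fun x => ENNReal.ofReal (g x (u x)) + ENNReal.ofReal (2 * |a1 x|) with hWdef
  have hWm : AEMeasurable W μ :=
    hguae.add (((habs ha1ae).const_mul 2).ennreal_ofReal)
  have hIW : ∫⁻ x, W x ∂μ ≠ ⊤ := by
    rw [hWdef, lintegral_add_right' _ (((habs ha1ae).const_mul 2).ennreal_ofReal)]
    refine (ENNReal.add_lt_top.mpr ⟨hgufin.lt_top, ?_⟩).ne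
    have : ∀ x, ENNReal.ofReal (2 * |a1 x|) = 2 * ENNReal.ofReal |a1 x| := by
      intro x; rw [ENNReal.ofReal_mul (by norm_num)]; norm_num
    simp_rw [this]
    rw [lintegral_const_mul' _ _ (by norm_num : (2:ℝ≥0∞) ≠ ⊤)]
    exact ENNReal.mul_lt_top (by norm_num) hIa1
  set G : ℕ → Euc n → ℝ≥0∞ :=
    fun i x => κ * (ENNReal.ofReal (g x (v i x)) + W x) with hGdef
  set Gl : Euc n → ℝ≥0∞ :=
    fun x => κ * (ENNReal.ofReal (g x (u x)) + W x) with hGldef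
  have hGm : ∀ i, AEMeasurable (G i) μ :=
    fun i => ((hgvae i).add hWm).const_mul κ
  -- the dominating inequality
  have hle : ∀ i, (fun x => (‖v i x - u x‖₊ : ℝ≥0∞) ^ q) ≤ᵐ[μ] G i := by
    intro i
    filter_upwards [hgrA] with x hx
    have h2q : (0:ℝ) < 2 ^ q := Real.rpow_pos_of_pos two_pos q
    have hv1 : c1 * |v i x| ^ q ≤ g x (v i x) + |a1 x| := by
      have := (hx (v i x)).1
      have := le_abs_self (a1 x)
      linarith
    have hu1 : c1 * |u x| ^ q ≤ g x (u x) + |a1 x| := by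
      have := (hx (u x)).1
      have := le_abs_self (a1 x)
      linarith
    have habs : |v i x - u x| ≤ |v i x| + |u x| := abs_sub _ _
    have hmaxq : max |v i x| |u x| ^ q ≤ |v i x| ^ q + |u x| ^ q := by
      rcases max_cases |v i x| |u x| with ⟨h, _⟩ | ⟨h, _⟩ <;> rw [h]
      · have := Real.rpow_nonneg (abs_nonneg (u x)) q; linarith
      · have := Real.rpow_nonneg (abs_nonneg (v i x)) q; linarith
    have hkey : |v i x - u x| ^ q ≤ 2 ^ q * (|v i x| ^ q + |u x| ^ q) := by
      calc |v i x - u x| ^ q ≤ (2 * max |v i x| |u x|) ^ q := by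
            apply Real.rpow_le_rpow (abs_nonneg _) _ hq0.le
            calc |v i x - u x| ≤ |v i x| + |u x| := habs
              _ ≤ 2 * max |v i x| |u x| := by
                  have h1 := le_max_left |v i x| |u x|
                  have h2 := le_max_right |v i x| |u x|
                  linarith
        _ = 2 ^ q * max |v i x| |u x| ^ q :=
            Real.mul_rpow (by norm_num) (le_max_of_le_left (abs_nonneg _))
        _ ≤ 2 ^ q * (|v i x| ^ q + |u x| ^ q) := by
            exact mul_le_mul_of_nonneg_left hmaxq h2q.le
    have hsum : |v i x| ^ q + |u x| ^ q ≤
        (g x (v i x) + (g x (u x) + 2 * |a1 x|)) / c1 := by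
      rw [le_div_iff₀ hc1]
      nlinarith
    have hreal : |v i x - u x| ^ q ≤
        2 ^ q / c1 * (g x (v i x) + (g x (u x) + 2 * |a1 x|)) := by
      calc |v i x - u x| ^ q ≤ 2 ^ q * (|v i x| ^ q + |u x| ^ q) := hkey
        _ ≤ 2 ^ q * ((g x (v i x) + (g x (u x) + 2 * |a1 x|)) / c1) :=
            mul_le_mul_of_nonneg_left hsum h2q.le
        _ = 2 ^ q / c1 * (g x (v i x) + (g x (u x) + 2 * |a1 x|)) := by
            ring
    calc (‖v i x - u x‖₊ : ℝ≥0∞) ^ q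
        = ENNReal.ofReal (|v i x - u x| ^ q) := hcast _
      _ ≤ ENNReal.ofReal (2 ^ q / c1 * (g x (v i x) + (g x (u x) + 2 * |a1 x|))) :=
          ENNReal.ofReal_le_ofReal hreal
      _ = G i x := by
          rw [hGdef]
          simp only
          rw [hWdef]
          simp only
          rw [ENNReal.ofReal_mul (div_nonneg h2q.le hc1.le),
            ENNReal.ofReal_add (hg0 x (v i x))
              (add_nonneg (hg0 x (u x)) (by positivity)),
            ENNReal.ofReal_add (hg0 x (u x)) (by positivity)]
  -- a.e. convergence of the dominated sequence to zero
  have hf0 : ∀ᵐ x ∂μ,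
      Tendsto (fun i => (‖v i x - u x‖₊ : ℝ≥0∞) ^ q) atTop (𝓝 0) := by
    filter_upwards [haet] with x hx
    have h1 : Tendsto (fun i => v i x - u x) atTop (𝓝 0) := by
      have := hx.sub (tendsto_const_nhds (x := u x))
      rwa [sub_self] at this
    have h2 : Tendsto (fun i => |v i x - u x|) atTop (𝓝 0) := by
      have := continuous_abs.tendsto (0:ℝ)
      rw [abs_zero] at this
      exact this.comp h1
    have h3 : Tendsto (fun i => |v i x - u x| ^ q) atTop (𝓝 0) := by
      have hca : ContinuousAt (fun y : ℝ => y ^ q) 0 :=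
        Real.continuousAt_rpow_const 0 q (Or.inr hq0.le)
      have := hca.tendsto.comp h2
      rwa [Real.zero_rpow hq0.ne'] at this
    have h4 : Tendsto (fun i => ENNReal.ofReal (|v i x - u x| ^ q)) atTop (𝓝 0) := by
      have := (ENNReal.continuous_ofReal.tendsto 0).comp h3
      rwa [ENNReal.ofReal_zero] at this
    simpa only [hcast] using h4
  -- a.e. convergence of the dominating sequence
  have hGt : ∀ᵐ x ∂μ, Tendsto (fun i => G i x) atTop (𝓝 (Gl x)) := by
    filter_upwards [haet, hgcA] with x hx hcx
    have h1 : Tendsto (fun i => g x (v i x)) atTop (𝓝 (g x (u x))) :=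
      (hcx.tendsto (u x)).comp hx
    have h2 : Tendsto (fun i => ENNReal.ofReal (g x (v i x))) atTop
        (𝓝 (ENNReal.ofReal (g x (u x)))) :=
      (ENNReal.continuous_ofReal.tendsto _).comp h1
    exact ENNReal.Tendsto.const_mul (h2.add tendsto_const_nhds) (Or.inr hκne)
  have hGfin : ∀ᵐ x ∂μ, Gl x ≠ ⊤ := by
    refine Filter.Eventually.of_forall fun x => ?_
    rw [hGldef]
    exact ENNReal.mul_ne_top hκne (ENNReal.add_ne_top.mpr
      ⟨ENNReal.ofReal_ne_top, ENNReal.add_ne_top.mpr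
        ⟨ENNReal.ofReal_ne_top, ENNReal.ofReal_ne_top⟩⟩)
  -- convergence of integrals of the dominating sequence
  have hGint_eq : ∀ i, ∫⁻ x, G i x ∂μ =
      κ * ((∫⁻ x, ENNReal.ofReal (g x (v i x)) ∂μ) + ∫⁻ x, W x ∂μ) := by
    intro i
    rw [hGdef]
    simp only
    rw [lintegral_const_mul' _ _ hκne, lintegral_add_right' _ hWm]
  have hGl_eq : ∫⁻ x, Gl x ∂μ =
      κ * ((∫⁻ x, ENNReal.ofReal (g x (u x)) ∂μ) + ∫⁻ x, W x ∂μ) := by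
    rw [hGldef]
    simp only
    rw [lintegral_const_mul' _ _ hκne, lintegral_add_right' _ hWm]
  have hlimsub : Tendsto (fun i => ∫⁻ x, ENNReal.ofReal (g x (v i x)) ∂μ) atTop
      (𝓝 (∫⁻ x, ENNReal.ofReal (g x (u x)) ∂μ)) :=
    hlim.comp (hns.comp hms.tendsto_atTop)
  have hGi : Tendsto (fun i => ∫⁻ x, G i x ∂μ) atTop (𝓝 (∫⁻ x, Gl x ∂μ)) := by
    rw [hGl_eq]
    have h := ENNReal.Tendsto.const_mul
      (hlimsub.add (tendsto_const_nhds (x := ∫⁻ x, W x ∂μ))) (Or.inr hκne)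
    exact Tendsto.congr (fun i => (hGint_eq i).symm) h
  have hGlt : ∫⁻ x, Gl x ∂μ ≠ ⊤ := by
    rw [hGl_eq]
    exact ENNReal.mul_ne_top hκne (ENNReal.add_ne_top.mpr ⟨hgufin, hIW⟩)
  exact lintegral_tendsto_zero_of_dominated
    (fun i => ((hvae i).sub huae).enorm.pow_const q)
    hle hf0 hGt hGfin hGm hGi hGlt
end

section
/- Let $f : \mathbb{R}^n \to [0,\infty)$ be convex, even, and positively homogeneous of degree $p > 1$, with $\lambda|\xi|^p \le f(\xi) \le \Lambda|\xi|^p$. Then the directional derivative bound $|\nabla_\xi f(\xi) \cdot v| \le p\, f(\xi)^{(p-1)/p} f(v)^{1/p}$ holds for every $v \in \mathbb{R}^n$ and almost every $\xi \in \mathbb{R}^n$ (at points of differentiability of $f$). -/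
open MeasureTheory Filter Topology Metric Set
open scoped ENNReal NNReal

section Aux
open Filter Topology Set

-- supporting hyperplane
lemma support_ineq {E : Type*} [NormedAddCommGroup E] [NormedSpace ℝ E]
    {f : E → ℝ} (hconv : ConvexOn ℝ Set.univ f) {ξ : E}
    (hd : DifferentiableAt ℝ f ξ) (w : E) :
    fderiv ℝ f ξ (w - ξ) ≤ f w - f ξ := by
  set φ : ℝ → ℝ := fun t => f (t • (w - ξ) + ξ) with hφ
  have hinner : HasDerivAt (fun t : ℝ => t • (w - ξ) + ξ) (w - ξ) (0 : ℝ) := by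
    simpa using ((hasDerivAt_id (0:ℝ)).smul_const (w - ξ)).add_const ξ
  have hder : HasDerivAt φ (fderiv ℝ f ξ (w - ξ)) 0 := by
    have := hd.hasFDerivAt.comp_hasDerivAt_of_eq 0 hinner (by simp)
    exact this
  have hφconv : ConvexOn ℝ Set.univ φ := by
    have := hconv.comp_affineMap (AffineMap.lineMap ξ w)
    simp only [Set.preimage_univ] at this
    have hfun : φ = f ∘ (AffineMap.lineMap ξ w) := by
      funext t
      simp [hφ, AffineMap.lineMap_apply, add_comm]
    rw [hfun]; exact this
  have := hφconv.le_slope_of_hasDerivAt (Set.mem_univ 0) (Set.mem_univ 1) one_pos hder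
  simpa [slope_def_field, hφ] using this

lemma euler {E : Type*} [NormedAddCommGroup E] [NormedSpace ℝ E]
    {f : E → ℝ} {p : ℝ} (hhom : ∀ t : ℝ, 0 ≤ t → ∀ ξ, f (t • ξ) = t ^ p * f ξ)
    {ξ : E} (hd : DifferentiableAt ℝ f ξ) :
    fderiv ℝ f ξ ξ = p * f ξ := by
  have hinner : HasDerivAt (fun t : ℝ => t • ξ) ξ (1 : ℝ) := by
    simpa using (hasDerivAt_id (1:ℝ)).smul_const ξ
  have h1 : HasDerivAt (fun t : ℝ => f (t • ξ)) (fderiv ℝ f ξ ξ) 1 :=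
    hd.hasFDerivAt.comp_hasDerivAt_of_eq 1 hinner (by simp)
  have h2 : HasDerivAt (fun t : ℝ => t ^ p * f ξ) (p * f ξ) 1 := by
    have := (Real.hasDerivAt_rpow_const (x := (1:ℝ)) (p := p) (Or.inl one_ne_zero)).mul_const (f ξ)
    simpa using this
  have heq : (fun t : ℝ => f (t • ξ)) =ᶠ[𝓝 (1:ℝ)] fun t => t ^ p * f ξ := by
    filter_upwards [eventually_gt_nhds (zero_lt_one)] with t ht
    exact hhom t ht.le ξ
  exact ((h2.congr_of_eventuallyEq heq).unique h1).symm

lemma key_bound {E : Type*} [NormedAddCommGroup E] [NormedSpace ℝ E]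
    {f : E → ℝ} {p lam : ℝ} (hp : 1 < p) (hlam : 0 < lam)
    (hconv : ConvexOn ℝ Set.univ f)
    (hhom : ∀ t : ℝ, 0 ≤ t → ∀ ξ, f (t • ξ) = t ^ p * f ξ)
    (hlow : ∀ ξ, lam * ‖ξ‖ ^ p ≤ f ξ)
    {ξ : E} (hd : DifferentiableAt ℝ f ξ) (w : E) :
    fderiv ℝ f ξ w ≤ p * f ξ ^ ((p - 1) / p) * f w ^ (1 / p) := by
  have hp0 : (0:ℝ) < p := lt_trans zero_lt_one hp
  have hfnn : ∀ u : E, 0 ≤ f u := fun u =>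
    le_trans (mul_nonneg hlam.le (Real.rpow_nonneg (norm_nonneg u) p)) (hlow u)
  have hzero : ∀ u : E, f u = 0 → u = 0 := by
    intro u hu
    have h1 : lam * ‖u‖ ^ p ≤ 0 := hu ▸ hlow u
    have h2 : (0:ℝ) ≤ ‖u‖ ^ p := Real.rpow_nonneg (norm_nonneg u) p
    have h3 : ‖u‖ ^ p = 0 := le_antisymm (nonpos_of_mul_nonpos_right h1 hlam) h2
    have := (Real.rpow_eq_zero_iff_of_nonneg (norm_nonneg u)).mp h3
    simpa using this.1
  -- the basic scaled inequality
  have hC : ∀ u : E, fderiv ℝ f ξ u ≤ f u + (p - 1) * f ξ := by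
    intro u
    have hs := support_ineq hconv hd u
    have he := euler hhom hd
    have : fderiv ℝ f ξ (u - ξ) = fderiv ℝ f ξ u - fderiv ℝ f ξ ξ := by
      rw [map_sub]
    rw [this, he] at hs
    linarith
  have hD : ∀ t : ℝ, 0 < t → t * fderiv ℝ f ξ w ≤ t ^ p * f w + (p - 1) * f ξ := by
    intro t ht
    have := hC (t • w)
    rwa [_root_.map_smul, smul_eq_mul, hhom t ht.le w] at this
  rcases eq_or_lt_of_le (hfnn w) with hfw | hfw
  · -- f w = 0, so w = 0
    have hw0 : w = 0 := hzero w hfw.symm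
    rw [hw0, map_zero, show f (0:E) = 0 from hw0 ▸ hfw.symm,
      Real.zero_rpow (by positivity : 1/p ≠ 0), mul_zero]
  rcases eq_or_lt_of_le (hfnn ξ) with hfξ | hfξ
  · -- f ξ = 0 : show derivative ≤ 0
    have h1 : ∀ᶠ t in 𝓝[>] (0:ℝ), fderiv ℝ f ξ w ≤ t ^ (p-1) * f w := by
      filter_upwards [self_mem_nhdsWithin] with t (ht : 0 < t)
      have := hD t ht
      rw [← hfξ, mul_zero, add_zero] at this
      have htp : t ^ p = t * t ^ (p-1) := by
        have h := Real.rpow_add ht 1 (p-1)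
        rw [show (1:ℝ)+(p-1) = p by ring, Real.rpow_one] at h
        exact h
      rw [htp, mul_assoc] at this
      exact le_of_mul_le_mul_left this ht
    have h2 : Tendsto (fun t : ℝ => t ^ (p-1) * f w) (𝓝[>] (0:ℝ)) (𝓝 0) := by
      have hc : Tendsto (fun t : ℝ => t ^ (p-1)) (𝓝 (0:ℝ)) (𝓝 ((0:ℝ) ^ (p-1))) :=
        (Real.continuousAt_rpow_const 0 (p-1) (Or.inr (by linarith))).tendsto
      rw [Real.zero_rpow (by linarith : p - 1 ≠ 0)] at hc
      have h5 : Tendsto (fun t : ℝ => t ^ (p-1)) (𝓝[>] (0:ℝ)) (𝓝 0) :=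
        hc.mono_left nhdsWithin_le_nhds
      simpa using h5.mul_const (f w)
    have hle0 : fderiv ℝ f ξ w ≤ 0 := ge_of_tendsto h2 h1
    calc fderiv ℝ f ξ w ≤ 0 := hle0
      _ ≤ p * f ξ ^ ((p - 1) / p) * f w ^ (1 / p) := by positivity
  · -- main case
    set t : ℝ := (f ξ / f w) ^ (1/p) with htdef
    have ht : 0 < t := Real.rpow_pos_of_pos (div_pos hfξ hfw) _
    have htp : t ^ p = f ξ / f w := by
      rw [htdef, ← Real.rpow_mul (div_pos hfξ hfw).le, one_div,
        inv_mul_cancel₀ hp0.ne', Real.rpow_one]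
    have := hD t ht
    rw [htp, div_mul_cancel₀ _ (ne_of_gt hfw)] at this
    have hkey : t * fderiv ℝ f ξ w ≤ p * f ξ := by linarith
    have ht_eq : t = f ξ ^ (1/p) / f w ^ (1/p) := by
      rw [htdef, Real.div_rpow hfξ.le hfw.le]
    have hL : fderiv ℝ f ξ w ≤ p * f ξ / t := by
      rw [le_div_iff₀ ht]
      linarith [hkey, mul_comm t (fderiv ℝ f ξ w)]
    refine hL.trans (le_of_eq ?_)
    rw [ht_eq]
    have hfξp : (0:ℝ) < f ξ ^ (1/p) := Real.rpow_pos_of_pos hfξ _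
    have hfwp : (0:ℝ) < f w ^ (1/p) := Real.rpow_pos_of_pos hfw _
    have hsplit : f ξ ^ ((p-1)/p) = f ξ / f ξ ^ (1/p) := by
      rw [show (p-1)/p = 1 - 1/p by field_simp, Real.rpow_sub hfξ, Real.rpow_one]
    rw [hsplit]
    field_simp

end Aux

theorem statement16 {n : ℕ} (p lam Lam : ℝ) (hp : 1 < p)
    (hlam : 0 < lam) (hlL : lam < Lam)
    (f : Euc n → ℝ) (hf : GoodIntegrand p lam Lam f) (v : Euc n) :
    ∀ᵐ ξ : Euc n ∂volume, DifferentiableAt ℝ f ξ →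
      |fderiv ℝ f ξ v| ≤ p * f ξ ^ ((p - 1) / p) * f v ^ (1 / p) := by
  obtain ⟨hconv, heven, hhom, hbd⟩ := hf
  have hlow : ∀ ξ : Euc n, lam * ‖ξ‖ ^ p ≤ f ξ := fun ξ => (hbd ξ).1
  filter_upwards with ξ hd
  refine abs_le.mpr ⟨?_, key_bound hp hlam hconv hhom hlow hd v⟩
  have h2 := key_bound hp hlam hconv hhom hlow hd (-v)
  rw [map_neg, heven] at h2
  linarith
end
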